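/- Let F be a field, ω ∈ F a primitive n-th root of unity, and suppose n = r + 2t with r ≥ 1 and t ≥ 1. Let E_i denote the i-th row of the Fourier matrix F_n, and set A = span{E_1, …, E_{t+1}}, B = span{E_0, …, E_{t−1}}, and 𝒞 = span{E_0, E_1, …, E_{r−1}}. Then (A, B) is a t-error-correcting pair for 𝒞; explicitly: (1) for all a ∈ A and b ∈ B the star product a*b lies in 𝒞^⊥; (2) dim A = t + 1 > t; (3) every nonzero a ∈ A has Hamming weight at least n − t and every nonzero c ∈ 𝒞 has Hamming weight at least 2t + 1 (so d(A) + d(𝒞) > n); (4) every nonzero v ∈ B^⊥ has Hamming weight at least t + 1 (so d(B^⊥) > t). -/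

import Mathlib

/-- The Hamming weight of a vector: the number of its nonzero coordinates. -/
noncomputable def hammingWt {n : ℕ} {F : Type*} [Zero F] (v : Fin n → F) : ℕ :=
  Nat.card {j : Fin n // v j ≠ 0}

/-- The dual code `C^⊥ = {v ∈ F^n : Σ_j v_j c_j = 0 for all c ∈ C}`. -/
def dualCode {F : Type*} [Field F] {n : ℕ} (C : Submodule F (Fin n → F)) :
    Submodule F (Fin n → F) where
  carrier := {v | ∀ c ∈ C, ∑ j, v j * c j = 0}
  zero_mem' := by
    intro c _
    simp
  add_mem' := by
    intro a b ha hb c hc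
    simp only [Set.mem_setOf_eq] at *
    simp [add_mul, Finset.sum_add_distrib, ha c hc, hb c hc]
  smul_mem' := by
    intro r a ha c hc
    simp only [Set.mem_setOf_eq] at *
    simp [mul_assoc, ← Finset.mul_sum, ha c hc]

/-! Through `p ↦ (ω^{sj} p(ω^j))_j`, the span of `E_s, …, E_{s+k-1}` is the image of the
polynomials of degree `< k`: a Reed–Solomon code on the `n` distinct points `ω^j`. A nonzero
polynomial of degree `< k` has at most `k - 1` roots among them, which gives the weight bounds and
the dimension of `A`. Star products multiply polynomials, and `∑_j ω^{sj} p(ω^j) = 0` when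
`0 < s` and `deg p + s < n` (a geometric sum for each monomial), which gives (1). Finally a vector
of weight `≤ t` orthogonal to `B` pairs nontrivially with the polynomial of degree `< t` vanishing
on all but one point of its support. -/

open Polynomial

section

variable {F : Type*} [Field F] {n : ℕ} {ω : F}

def fourierRow (ω : F) (n i : ℕ) : Fin n → F := fun j => ω ^ (i * (j : ℕ))

noncomputable def twistedEval (ω : F) (n s : ℕ) : F[X] →ₗ[F] Fin n → F :=
  LinearMap.pi fun j => ω ^ (s * (j : ℕ)) • leval (ω ^ (j : ℕ))

@[simp]
lemma twistedEval_apply (s : ℕ) (p : F[X]) (j : Fin n) :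
    twistedEval ω n s p j = ω ^ (s * (j : ℕ)) * p.eval (ω ^ (j : ℕ)) :=
  rfl

lemma twistedEval_X_pow (s i : ℕ) : twistedEval ω n s (X ^ i) = fourierRow ω n (i + s) := by
  ext j
  simp only [twistedEval_apply, eval_pow, eval_X, fourierRow, ← pow_mul, ← pow_add]
  congr 1
  ring

lemma span_fourierRow_eq_map_degreeLT (ω : F) (n s k : ℕ) :
    Submodule.span F (Set.range fun i : Fin k => fourierRow ω n (i + s)) =
      (degreeLT F k).map (twistedEval ω n s) := by
  classical
  rw [degreeLT_eq_span_X_pow, Submodule.map_span]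
  congr 1
  ext v
  simp [twistedEval_X_pow, Fin.exists_iff]

lemma twistedEval_mul_twistedEval (s s' : ℕ) (p q : F[X]) (j : Fin n) :
    twistedEval ω n s p j * twistedEval ω n s' q j = twistedEval ω n (s + s') (p * q) j := by
  simp only [twistedEval_apply, eval_mul, add_mul, pow_add]
  ring

lemma natDegree_le_pred_of_mem_degreeLT {k : ℕ} {p : F[X]} (hp : p ∈ degreeLT F k) :
    p.natDegree ≤ k - 1 := by
  rcases eq_or_ne p 0 with rfl | hp0
  · simp
  · have := (natDegree_lt_iff_degree_lt hp0).2 (mem_degreeLT.1 hp)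
    omega

lemma hammingWt_add_card_eq_zero (v : Fin n → F) :
    hammingWt v + Nat.card {j // v j = 0} = n := by
  classical
  rw [hammingWt, Nat.card_eq_fintype_card, Nat.card_eq_fintype_card, add_comm,
    Fintype.card_subtype_compl, Nat.add_sub_of_le (Fintype.card_subtype_le _), Fintype.card_fin]

@[simp]
lemma hammingWt_zero : hammingWt (0 : Fin n → F) = 0 := by
  simp [hammingWt]

lemma card_eval_pow_eq_zero_le (hω : IsPrimitiveRoot ω n) {p : F[X]} (hp : p ≠ 0) :
    Nat.card {j : Fin n // p.eval (ω ^ (j : ℕ)) = 0} ≤ p.natDegree := by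
  classical
  by_contra! h
  rw [Nat.card_eq_fintype_card] at h
  refine hp (eq_zero_of_natDegree_lt_card_of_eval_eq_zero p
    (f := fun j : {j : Fin n // p.eval (ω ^ (j : ℕ)) = 0} => ω ^ (j : ℕ)) ?_ (fun j => j.2) h)
  intro i j hij
  exact Subtype.ext (Fin.ext (hω.pow_inj i.1.isLt j.1.isLt hij))

lemma le_hammingWt_twistedEval_add_natDegree (hω : IsPrimitiveRoot ω n) (s : ℕ) {p : F[X]}
    (hp : p ≠ 0) : n ≤ hammingWt (twistedEval ω n s p) + p.natDegree := by
  rcases Nat.eq_zero_or_pos n with rfl | hn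
  · exact Nat.zero_le _
  have hzeros : Nat.card {j // twistedEval ω n s p j = 0} ≤
      Nat.card {j : Fin n // p.eval (ω ^ (j : ℕ)) = 0} := by
    refine Nat.card_le_card_of_injective (fun j => ⟨j.1, ?_⟩) fun i j hij => ?_
    · have hj := j.2
      rw [twistedEval_apply] at hj
      exact (mul_eq_zero.1 hj).resolve_left (pow_ne_zero _ (hω.ne_zero hn.ne'))
    · exact Subtype.ext (by simpa using hij)
  have := hammingWt_add_card_eq_zero (twistedEval ω n s p)
  have := card_eval_pow_eq_zero_le hω hp
  omega

lemma lt_hammingWt_add_of_mem_map_degreeLT (hω : IsPrimitiveRoot ω n) {s k : ℕ}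
    {v : Fin n → F} (hv : v ∈ (degreeLT F k).map (twistedEval ω n s)) (hv0 : v ≠ 0) :
    n < hammingWt v + k := by
  obtain ⟨p, hp, rfl⟩ := hv
  have hp0 : p ≠ 0 := by rintro rfl; exact hv0 (map_zero _)
  have := (natDegree_lt_iff_degree_lt hp0).2 (mem_degreeLT.1 hp)
  have := le_hammingWt_twistedEval_add_natDegree hω s hp0
  omega

lemma finrank_map_twistedEval_degreeLT (hω : IsPrimitiveRoot ω n) (s : ℕ) {k : ℕ}
    (hk : k ≤ n) : Module.finrank F ((degreeLT F k).map (twistedEval ω n s)) = k := by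
  have hinj : Function.Injective ((twistedEval ω n s).comp (degreeLT F k).subtype) := by
    rw [← LinearMap.ker_eq_bot, LinearMap.ker_eq_bot']
    rintro ⟨p, hp⟩ hev
    by_contra hne
    have hp0 : p ≠ 0 := fun h => hne (Subtype.ext h)
    have hwt := le_hammingWt_twistedEval_add_natDegree hω s hp0
    have := (natDegree_lt_iff_degree_lt hp0).2 (mem_degreeLT.1 hp)
    rw [show twistedEval ω n s p = 0 from hev, hammingWt_zero] at hwt
    omega
  rw [← Submodule.range_subtype (degreeLT F k), ← LinearMap.range_comp,
    LinearMap.finrank_range_of_inj hinj, (degreeLTEquiv F k).finrank_eq, Module.finrank_fin_fun]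

lemma sum_pow_mul_eq_zero (hω : IsPrimitiveRoot ω n) {s : ℕ} (hs : 0 < s) (hsn : s < n) :
    ∑ j : Fin n, ω ^ (s * (j : ℕ)) = 0 := by
  simp_rw [pow_mul]
  rw [Fin.sum_univ_eq_sum_range (fun j => (ω ^ s) ^ j) n,
    geom_sum_eq (hω.pow_ne_one_of_pos_of_lt hs.ne' hsn), ← pow_mul, mul_comm, pow_mul,
    hω.pow_eq_one, one_pow, sub_self, zero_div]

lemma sum_twistedEval_eq_zero (hω : IsPrimitiveRoot ω n) {s : ℕ} (hs : 0 < s) {p : F[X]}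
    (hp : p.natDegree + s < n) : ∑ j, twistedEval ω n s p j = 0 := by
  simp only [twistedEval_apply, eval_eq_sum_range, Finset.mul_sum]
  rw [Finset.sum_comm]
  refine Finset.sum_eq_zero fun i hi => ?_
  have hi : i < p.natDegree + 1 := Finset.mem_range.1 hi
  rw [← mul_zero (p.coeff i), ← sum_pow_mul_eq_zero hω (s := i + s) (by omega) (by omega),
    Finset.mul_sum]
  refine Finset.sum_congr rfl fun j _ => ?_
  ring

lemma mem_dualCode_map_iff {M : Type*} [AddCommGroup M] [Module F M] {f : M →ₗ[F] Fin n → F}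
    {P : Submodule F M} {v : Fin n → F} :
    v ∈ dualCode (P.map f) ↔ ∀ p ∈ P, ∑ j, v j * f p j = 0 :=
  ⟨fun hv p hp => hv _ (Submodule.mem_map_of_mem hp), by rintro hv _ ⟨p, hp, rfl⟩; exact hv p hp⟩

lemma mul_mem_dualCode_map_degreeLT (hω : IsPrimitiveRoot ω n) {s s' k l m : ℕ}
    (hs : 0 < s + s') (hklm : (k - 1) + (l - 1) + (m - 1) + (s + s') < n) {a b : Fin n → F}
    (ha : a ∈ (degreeLT F k).map (twistedEval ω n s))
    (hb : b ∈ (degreeLT F l).map (twistedEval ω n s')) :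
    (fun j => a j * b j) ∈ dualCode ((degreeLT F m).map (twistedEval ω n 0)) := by
  obtain ⟨p, hp, rfl⟩ := ha
  obtain ⟨q, hq, rfl⟩ := hb
  refine mem_dualCode_map_iff.2 fun c hc => ?_
  simp_rw [twistedEval_mul_twistedEval, add_zero]
  refine sum_twistedEval_eq_zero hω hs (lt_of_le_of_lt ?_ hklm)
  have := natDegree_le_pred_of_mem_degreeLT hp
  have := natDegree_le_pred_of_mem_degreeLT hq
  have := natDegree_le_pred_of_mem_degreeLT hc
  have := natDegree_mul_le (p := p * q) (q := c)
  have := natDegree_mul_le (p := p) (q := q)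
  omega

lemma lt_hammingWt_of_mem_dualCode_map_degreeLT (hω : IsPrimitiveRoot ω n) {k : ℕ}
    {v : Fin n → F} (hv : v ∈ dualCode ((degreeLT F k).map (twistedEval ω n 0))) (hv0 : v ≠ 0) :
    k < hammingWt v := by
  classical
  obtain ⟨j₀, hj₀⟩ := Function.ne_iff.1 hv0
  set S := Finset.univ.filter fun j => v j ≠ 0
  have hwt : hammingWt v = S.card := by
    rw [hammingWt, Nat.card_eq_fintype_card, Fintype.card_subtype]
  have hj₀S : j₀ ∈ S := Finset.mem_filter.2 ⟨Finset.mem_univ _, hj₀⟩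
  by_contra! hle
  -- `g` vanishes on the support of `v` except at `j₀`, so pairing it with `v` leaves `v j₀ g(ω^j₀)`.
  set g := Lagrange.nodal (S.erase j₀) fun j : Fin n => ω ^ (j : ℕ)
  have hg : g ∈ degreeLT F k := by
    rw [mem_degreeLT, Lagrange.degree_nodal, Nat.cast_lt]
    have := Finset.card_erase_lt_of_mem hj₀S
    omega
  have hsum := mem_dualCode_map_iff.1 hv g hg
  simp only [twistedEval_apply, zero_mul, pow_zero, one_mul] at hsum
  rw [Finset.sum_eq_single j₀] at hsum
  · refine mul_ne_zero hj₀ (Lagrange.eval_nodal_not_at_node fun j hj h => ?_) hsum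
    exact (Finset.mem_erase.1 hj).1 (Fin.ext (hω.pow_inj j₀.isLt j.isLt h)).symm
  · intro j _ hj
    by_cases hvj : v j = 0
    · rw [hvj, zero_mul]
    · have hjS : j ∈ S.erase j₀ := Finset.mem_erase.2 ⟨hj, by simpa [S] using hvj⟩
      exact mul_eq_zero_of_right _
        (Lagrange.eval_nodal_at_node (v := fun j : Fin n => ω ^ (j : ℕ)) hjS)
  · simp

end

/-- Let `ω ∈ F` be a primitive `n`-th root of unity with
`n = r + 2t`, `r ≥ 1`, `t ≥ 1`.  With `E_i` the `i`-th row of the Fourier matrix,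
set `A = span{E_1, …, E_{t+1}}`, `B = span{E_0, …, E_{t-1}}` and
`𝒞 = span{E_0, …, E_{r-1}}`.  Then `(A, B)` is a `t`-error-correcting pair for
`𝒞`: (1) for all `a ∈ A`, `b ∈ B` the star product `a*b` lies in `𝒞^⊥`;
(2) `dim A = t + 1 > t`; (3) every nonzero `a ∈ A` has Hamming weight at least
`n - t` and every nonzero `c ∈ 𝒞` has Hamming weight at least `2t + 1`
(so `d(A) + d(𝒞) > n`); (4) every nonzero `v ∈ B^⊥` has Hamming weight at least
`t + 1` (so `d(B^⊥) > t`). -/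
theorem fourier_error_correcting_pair {F : Type*} [Field F]
    (n r t : ℕ) (ω : F) (hω : IsPrimitiveRoot ω n)
    (hr : 1 ≤ r) (ht : 1 ≤ t) (hn : n = r + 2 * t) :
    let E : ℕ → Fin n → F := fun i => fun j => ω ^ (i * (j : ℕ))
    let A := Submodule.span F (Set.range fun i : Fin (t + 1) => E ((i : ℕ) + 1))
    let B := Submodule.span F (Set.range fun i : Fin t => E (i : ℕ))
    let C := Submodule.span F (Set.range fun i : Fin r => E (i : ℕ))
    (∀ a ∈ A, ∀ b ∈ B, (fun j => a j * b j) ∈ dualCode C) ∧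
      Module.finrank F A = t + 1 ∧
      (∀ a ∈ A, a ≠ 0 → n - t ≤ hammingWt a) ∧
      (∀ c ∈ C, c ≠ 0 → 2 * t + 1 ≤ hammingWt c) ∧
      (∀ v ∈ dualCode B, v ≠ 0 → t + 1 ≤ hammingWt v) := by
  intro E A B C
  have hA : A = (degreeLT F (t + 1)).map (twistedEval ω n 1) :=
    span_fourierRow_eq_map_degreeLT ω n 1 (t + 1)
  have hB : B = (degreeLT F t).map (twistedEval ω n 0) := span_fourierRow_eq_map_degreeLT ω n 0 t
  have hC : C = (degreeLT F r).map (twistedEval ω n 0) := span_fourierRow_eq_map_degreeLT ω n 0 r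
  rw [hA, hB, hC]
  refine ⟨fun a ha b hb => mul_mem_dualCode_map_degreeLT hω (by omega) (by omega) ha hb,
    finrank_map_twistedEval_degreeLT hω 1 (by omega), fun a ha ha0 => ?_, fun c hc hc0 => ?_,
    fun v hv hv0 => lt_hammingWt_of_mem_dualCode_map_degreeLT hω hv hv0⟩
  · have := lt_hammingWt_add_of_mem_map_degreeLT hω ha ha0
    omega
  · have := lt_hammingWt_add_of_mem_map_degreeLT hω hc hc0
    omega
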